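/- arXiv:2008.11063 — 7 statements merged into one kernel-verified Lean document; each statement's English description precedes it below -/
import Mathlib

section
/- Let p be a prime, f a polynomial with coefficients in the ring ℤ_p of p-adic integers, a ∈ ℤ_p, and s ≥ 1 an integer such that ‖f(a)‖ ≤ p^(−s) and ‖f′(a)‖ = 1. Then f′(a) is a unit of ℤ_p, and the Newton iterate a′ := a − f(a)/f′(a) ∈ ℤ_p satisfies ‖f(a′)‖ ≤ p^(−2s) and ‖f′(a′)‖ = 1. -/
/-!
Polynomials over `ℤ_[p]` are `1`-Lipschitz, and the second-order Taylor remainder at `a` has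
norm at most `‖h‖²`. The Newton correction `h` has norm `‖f(a)‖` and cancels the linear Taylor
term, so `‖f(a')‖ ≤ ‖f(a)‖²`; and `f'(a')` lies within distance `‖f(a)‖ < 1` of the unit `f'(a)`,
hence is again a unit.
-/

open Polynomial

noncomputable def Polynomial.newtonStep {R : Type*} [CommRing R] (f : R[X]) (a : R) : R :=
  a - f.eval a * Ring.inverse (f.derivative.eval a)

namespace PadicInt

variable {p : ℕ} [Fact p.Prime]

theorem norm_ringInverse_of_norm_eq_one {u : ℤ_[p]} (hu : ‖u‖ = 1) :
    ‖Ring.inverse u‖ = 1 := by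
  obtain ⟨v, rfl⟩ := isUnit_iff.mpr hu
  rw [Ring.inverse_unit]
  exact norm_units v⁻¹

theorem norm_eval_sub_eval_le (g : ℤ_[p][X]) (x y : ℤ_[p]) :
    ‖g.eval x - g.eval y‖ ≤ ‖x - y‖ := by
  obtain ⟨k, hk⟩ := sub_dvd_eval_sub x y g
  rw [hk, norm_mul]
  exact mul_le_of_le_one_right (norm_nonneg _) (norm_le_one k)

theorem norm_eval_add_sub_linear_le (g : ℤ_[p][X]) (x h : ℤ_[p]) :
    ‖g.eval (x + h) - (g.eval x + g.derivative.eval x * h)‖ ≤ ‖h‖ ^ 2 := by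
  obtain ⟨k, hk⟩ := g.binomExpansion x h
  rw [hk, add_sub_cancel_left, norm_mul, norm_pow]
  exact mul_le_of_le_one_left (by positivity) (norm_le_one k)

section newton

variable {f : ℤ_[p][X]} {a : ℤ_[p]}

theorem norm_newtonStep_sub (hf' : ‖f.derivative.eval a‖ = 1) :
    ‖f.newtonStep a - a‖ = ‖f.eval a‖ := by
  rw [newtonStep, sub_sub_cancel_left, norm_neg, norm_mul,
    norm_ringInverse_of_norm_eq_one hf', mul_one]

theorem norm_eval_newtonStep_le (hf' : ‖f.derivative.eval a‖ = 1) :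
    ‖f.eval (f.newtonStep a)‖ ≤ ‖f.eval a‖ ^ 2 := by
  set h := f.newtonStep a - a
  -- the Newton correction `h` kills the linear term of the Taylor expansion at `a`
  have hlin : f.eval a + f.derivative.eval a * h = 0 := by
    rw [show h = -(f.eval a * Ring.inverse (f.derivative.eval a)) by
        simp only [h, newtonStep, sub_sub_cancel_left],
      mul_neg, mul_left_comm, Ring.mul_inverse_cancel _ (isUnit_iff.mpr hf'), mul_one,
      add_neg_cancel]
  have := norm_eval_add_sub_linear_le f a h
  rwa [add_sub_cancel, hlin, sub_zero, norm_newtonStep_sub hf'] at this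

theorem norm_eval_derivative_newtonStep (hf' : ‖f.derivative.eval a‖ = 1)
    (hf : ‖f.eval a‖ < 1) : ‖f.derivative.eval (f.newtonStep a)‖ = 1 := by
  have hclose : ‖f.derivative.eval (f.newtonStep a) - f.derivative.eval a‖ < 1 :=
    (norm_eval_sub_eval_le _ _ _).trans_lt ((norm_newtonStep_sub hf').trans_lt hf)
  rw [← hf', ← sub_add_cancel (f.derivative.eval (f.newtonStep a)) (f.derivative.eval a),
    norm_add_eq_max_of_ne (by rw [hf']; exact hclose.ne), hf', max_eq_right hclose.le]

end newton

end PadicInt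

open PadicInt in
theorem stmt_1 (p : ℕ) [Fact p.Prime] (f : Polynomial ℤ_[p]) (a : ℤ_[p]) (s : ℕ) (hs : 1 ≤ s)
    (hfa : ‖Polynomial.eval a f‖ ≤ (p : ℝ) ^ (-(s : ℤ)))
    (hfa' : ‖Polynomial.eval a (Polynomial.derivative f)‖ = 1) :
    IsUnit (Polynomial.eval a (Polynomial.derivative f)) ∧
    ‖Polynomial.eval
        (a - Polynomial.eval a f * Ring.inverse (Polynomial.eval a (Polynomial.derivative f))) f‖
      ≤ (p : ℝ) ^ (-(2 * s : ℤ)) ∧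
    ‖Polynomial.eval
        (a - Polynomial.eval a f * Ring.inverse (Polynomial.eval a (Polynomial.derivative f)))
        (Polynomial.derivative f)‖ = 1 := by
  have hp : (1 : ℝ) < p := mod_cast (Fact.out : p.Prime).one_lt
  have hf_lt : ‖f.eval a‖ < 1 := hfa.trans_lt (zpow_lt_one_of_neg₀ hp (by omega))
  refine ⟨isUnit_iff.mpr hfa', ?_, norm_eval_derivative_newtonStep hfa' hf_lt⟩
  calc ‖f.eval (f.newtonStep a)‖ ≤ ‖f.eval a‖ ^ 2 := norm_eval_newtonStep_le hfa'
    _ ≤ ((p : ℝ) ^ (-(s : ℤ))) ^ 2 := pow_le_pow_left₀ (norm_nonneg _) hfa 2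
    _ = (p : ℝ) ^ (-(2 * s : ℤ)) := by rw [← zpow_natCast, ← zpow_mul]; ring_nf
end

section
/- Let p be a prime, f a nonzero polynomial over the field ℚ_p of p-adic numbers, and a ∈ ℚ_p. Let c_i denote the coefficients of the shifted polynomial f(X + a), so that c₀ = f(a) and c₁ = f′(a); assume c₀ ≠ 0 and c₁ ≠ 0, and that for every index i with 2 ≤ i ≤ deg f and c_i ≠ 0 one has v_p(c_i) > v_p(c₀) + i·(v_p(c₁) − v_p(c₀)). Then there exists a unique b ∈ ℚ_p such that f(b) = 0 and v_p(a − b) ≥ v_p(c₀) − v_p(c₁); moreover this b satisfies v_p(a − b) = v_p(c₀) − v_p(c₁). -/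
/-!
Write `g = f(X + a) = Σ cᵢ Xⁱ` and `π = c₀ / c₁`, so that `a - π` is Newton's first
approximation. The Newton polygon condition says exactly that `H(Y) = g(-π Y) / c₀` has
coefficients in `ℤ_p` and reduces to `1 - Y` modulo `p`. By Hensel's lemma `H` has exactly
one root `z` in `ℤ_p`, and `z ≡ 1 (mod p)` is a unit. The roots `b` of `f` with
`v(a - b) ≥ v(π)` are the points `a - π y` with `y ∈ ℤ_p` and `H(y) = 0`, so `b = a - π z` is
the only one, and `v(a - b) = v(π) + v(z) = v(π)`.
-/

open Polynomial

namespace Padic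

variable {p : ℕ} [Fact p.Prime]

theorem valuation_neg (x : ℚ_[p]) : (-x).valuation = x.valuation := by
  rcases eq_or_ne x 0 with rfl | hx
  · simp
  · exact_mod_cast (addValuation.apply (neg_ne_zero.2 hx)).symm.trans
      ((AddValuation.map_neg _ x).trans (addValuation.apply hx))

theorem valuation_div {x y : ℚ_[p]} (hx : x ≠ 0) (hy : y ≠ 0) :
    (x / y).valuation = x.valuation - y.valuation := by
  rw [div_eq_mul_inv, valuation_mul hx (inv_ne_zero hy), valuation_inv, sub_eq_add_neg]

theorem norm_lt_one_iff_valuation_pos {x : ℚ_[p]} (hx : x ≠ 0) :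
    ‖x‖ < 1 ↔ 0 < x.valuation := by
  rw [norm_eq_zpow_neg_valuation hx,
    zpow_lt_one_iff_right₀ (by exact_mod_cast (Fact.out : p.Prime).one_lt), neg_neg_iff_pos]

theorem valuation_mul_of_norm_eq_one {x y : ℚ_[p]} (hx : x ≠ 0) (hy : ‖y‖ = 1) :
    (x * y).valuation = x.valuation := by
  have hy0 : y ≠ 0 := norm_ne_zero_iff.1 (hy ▸ one_ne_zero)
  rw [norm_eq_zpow_neg_valuation hy0, zpow_eq_one_iff_right₀ (by positivity)
    (by exact_mod_cast (Fact.out : p.Prime).ne_one), neg_eq_zero] at hy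
  rw [valuation_mul hx hy0, hy, add_zero]

theorem exists_eq_mul_of_valuation_le {x y : ℚ_[p]} (hy : y ≠ 0)
    (h : y.valuation ≤ x.valuation) : ∃ z : ℤ_[p], x = y * z := by
  have hxy : ‖x / y‖ ≤ 1 := by
    rcases eq_or_ne x 0 with rfl | hx
    · simp
    · rw [norm_le_one_iff_val_nonneg, valuation_div hx hy]
      omega
  exact ⟨⟨x / y, hxy⟩, (mul_div_cancel₀ x hy).symm⟩

theorem exists_map_coe_eq {h : ℚ_[p][X]} (hh : ∀ i, ‖h.coeff i‖ ≤ 1) :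
    ∃ H : ℤ_[p][X], H.map PadicInt.Coe.ringHom = h :=
  (mem_lifts h).mp ((lifts_iff_coeff_lifts h).mpr fun i => ⟨⟨h.coeff i, hh i⟩, rfl⟩)

end Padic

namespace PadicInt

variable {p : ℕ} [Fact p.Prime]

theorem norm_lt_one_iff_toZMod_eq_zero {x : ℤ_[p]} : ‖x‖ < 1 ↔ toZMod x = 0 := by
  rw [← RingHom.mem_ker, ker_toZMod, IsLocalRing.mem_maximalIdeal, mem_nonunits]

theorem norm_eq_one_iff_toZMod_ne_zero {x : ℤ_[p]} : ‖x‖ = 1 ↔ toZMod x ≠ 0 := by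
  rw [ne_eq, ← norm_lt_one_iff_toZMod_eq_zero, (norm_le_one x).lt_iff_ne, not_not]

theorem map_toZMod_eq_of_norm_coeff_lt_one {F : ℤ_[p][X]}
    (hF : ∀ i, 2 ≤ i → ‖F.coeff i‖ < 1) :
    F.map toZMod = C (toZMod (F.coeff 0)) + C (toZMod (F.coeff 1)) * X := by
  ext (_ | _ | i)
  · simp
  · simp
  · simp [norm_lt_one_iff_toZMod_eq_zero.mp (hF (i + 2) (by omega))]

section LinearReduction

variable {F : ℤ_[p][X]} {u v : ZMod p}

theorem toZMod_eval_of_map_toZMod_eq (hF : F.map toZMod = C u + C v * X) (y : ℤ_[p]) :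
    toZMod (F.eval y) = u + v * toZMod y := by
  rw [← eval_map_apply, hF]
  simp

theorem toZMod_eq_of_eval_eq_zero (hv : v ≠ 0) (hF : F.map toZMod = C u + C v * X) {z : ℤ_[p]}
    (hz : F.eval z = 0) : toZMod z = -u / v := by
  have h := toZMod_eval_of_map_toZMod_eq hF z
  rw [hz, map_zero] at h
  field_simp
  linear_combination -h

theorem norm_eq_one_of_eval_eq_zero (hu : u ≠ 0) (hv : v ≠ 0)
    (hF : F.map toZMod = C u + C v * X) {z : ℤ_[p]} (hz : F.eval z = 0) : ‖z‖ = 1 := by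
  rw [norm_eq_one_iff_toZMod_ne_zero, toZMod_eq_of_eval_eq_zero hv hF hz]
  exact div_ne_zero (neg_ne_zero.2 hu) hv

theorem existsUnique_eval_eq_zero_of_map_toZMod_eq (hv : v ≠ 0)
    (hF : F.map toZMod = C u + C v * X) : ∃! z, F.eval z = 0 := by
  obtain ⟨y₀, hy₀⟩ := ZMod.ringHom_surjective toZMod (-u / v)
  have hderiv : ‖F.derivative.eval y₀‖ = 1 := by
    rw [norm_eq_one_iff_toZMod_ne_zero, ← eval_map_apply, ← derivative_map, hF]
    simpa using hv
  have happrox : ‖F.eval y₀‖ < ‖F.derivative.eval y₀‖ ^ 2 := by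
    rw [hderiv, one_pow, norm_lt_one_iff_toZMod_eq_zero, toZMod_eval_of_map_toZMod_eq hF, hy₀]
    field_simp
    ring
  obtain ⟨z, hz, -, -, huniq⟩ := hensels_lemma (F := F) (a := y₀) (by simpa using happrox)
  refine ⟨z, by simpa using hz, fun z' hz' => huniq z' (by simpa using hz') ?_⟩
  rw [coe_aeval_eq_eval, hderiv, norm_lt_one_iff_toZMod_eq_zero, map_sub,
    toZMod_eq_of_eval_eq_zero hv hF hz', hy₀, sub_self]

end LinearReduction

end PadicInt

namespace Padic

variable {p : ℕ} [Fact p.Prime]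

theorem exists_rescaling_map_toZMod_eq_one_sub_X {g : ℚ_[p][X]} (h0 : g.coeff 0 ≠ 0)
    (h1 : g.coeff 1 ≠ 0)
    (hface : ∀ i : ℕ, 2 ≤ i → g.coeff i ≠ 0 → (g.coeff 0).valuation
      + i * ((g.coeff 1).valuation - (g.coeff 0).valuation) < (g.coeff i).valuation) :
    ∃ H : ℤ_[p][X], H.map PadicInt.toZMod = C 1 + C (-1) * X ∧
      ∀ y : ℤ_[p], g.eval (-(g.coeff 0 / g.coeff 1 * y)) = g.coeff 0 * H.eval y := by
  set π := g.coeff 0 / g.coeff 1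
  have hπ : π ≠ 0 := div_ne_zero h0 h1
  set h := C (g.coeff 0)⁻¹ * g.comp (C (-π) * X)
  have hcoeff (i : ℕ) : h.coeff i = (g.coeff 0)⁻¹ * (g.coeff i * (-π) ^ i) := by
    rw [coeff_C_mul, comp_C_mul_X_coeff]
  have hcoeff0 : h.coeff 0 = 1 := by simp [hcoeff, h0]
  have hcoeff1 : h.coeff 1 = -1 := by
    rw [hcoeff, pow_one]
    simp only [π]
    field_simp
  have hsmall (i : ℕ) (hi : 2 ≤ i) : ‖h.coeff i‖ < 1 := by
    by_cases hci : g.coeff i = 0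
    · simp [hcoeff, hci]
    have hpow : (-π) ^ i ≠ 0 := pow_ne_zero _ (neg_ne_zero.2 hπ)
    rw [hcoeff, norm_lt_one_iff_valuation_pos (by simp [h0, hci, hπ]),
      valuation_mul (inv_ne_zero h0) (mul_ne_zero hci hpow), valuation_mul hci hpow,
      valuation_pow, valuation_neg, valuation_div h0 h1, valuation_inv]
    linarith [hface i hi hci]
  obtain ⟨H, hH⟩ := exists_map_coe_eq (h := h) fun
    | 0 => by simp [hcoeff0]
    | 1 => by simp [hcoeff1]
    | i + 2 => (hsmall (i + 2) (by omega)).le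
  have hHcoeff (i : ℕ) : (H.coeff i : ℚ_[p]) = h.coeff i := by
    rw [← hH, coeff_map]
    rfl
  have hHeval (y : ℤ_[p]) : ((H.eval y : ℤ_[p]) : ℚ_[p]) = h.eval (y : ℚ_[p]) := by
    rw [← hH]
    exact (eval_map_apply (f := PadicInt.Coe.ringHom) y).symm
  refine ⟨H, ?_, fun y => ?_⟩
  · have hH0 : H.coeff 0 = 1 := PadicInt.ext (by rw [hHcoeff, hcoeff0]; rfl)
    have hH1 : H.coeff 1 = -1 := PadicInt.ext (by rw [hHcoeff, hcoeff1]; rfl)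
    rw [PadicInt.map_toZMod_eq_of_norm_coeff_lt_one fun i hi => by
      rw [PadicInt.norm_def, hHcoeff]; exact hsmall i hi, hH0, hH1]
    simp
  · rw [hHeval]
    simp [h, eval_comp, h0]

end Padic

theorem stmt_4_general (p : ℕ) [Fact p.Prime] (f : Polynomial ℚ_[p]) (a : ℚ_[p])
    (h0 : (f.comp (Polynomial.X + Polynomial.C a)).coeff 0 ≠ 0)
    (h1 : (f.comp (Polynomial.X + Polynomial.C a)).coeff 1 ≠ 0)
    (hface : ∀ i : ℕ, 2 ≤ i → i ≤ f.natDegree →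
      (f.comp (Polynomial.X + Polynomial.C a)).coeff i ≠ 0 →
      ((f.comp (Polynomial.X + Polynomial.C a)).coeff 0).valuation
        + (i : ℤ) * (((f.comp (Polynomial.X + Polynomial.C a)).coeff 1).valuation
          - ((f.comp (Polynomial.X + Polynomial.C a)).coeff 0).valuation)
        < ((f.comp (Polynomial.X + Polynomial.C a)).coeff i).valuation) :
    (∃! b : ℚ_[p], f.eval b = 0 ∧
      ((f.comp (Polynomial.X + Polynomial.C a)).coeff 0).valuation
        - ((f.comp (Polynomial.X + Polynomial.C a)).coeff 1).valuation
        ≤ (a - b).valuation) ∧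
    ∀ b : ℚ_[p], f.eval b = 0 →
      ((f.comp (Polynomial.X + Polynomial.C a)).coeff 0).valuation
        - ((f.comp (Polynomial.X + Polynomial.C a)).coeff 1).valuation
        ≤ (a - b).valuation →
      (a - b).valuation = ((f.comp (Polynomial.X + Polynomial.C a)).coeff 0).valuation
        - ((f.comp (Polynomial.X + Polynomial.C a)).coeff 1).valuation := by
  set g := f.comp (X + C a)
  set π := g.coeff 0 / g.coeff 1
  have hπ : π ≠ 0 := div_ne_zero h0 h1
  obtain ⟨H, hHmod, hHeval⟩ := Padic.exists_rescaling_map_toZMod_eq_one_sub_X h0 h1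
    fun i hi hci => hface i hi (by simpa [g, natDegree_comp] using le_natDegree_of_ne_zero hci) hci
  have hfH (y : ℤ_[p]) : f.eval (a - π * y) = g.coeff 0 * H.eval y := by
    rw [← hHeval]
    simp [g, π, eval_comp, sub_eq_neg_add]
  have hv : (-1 : ZMod p) ≠ 0 := neg_ne_zero.2 one_ne_zero
  obtain ⟨z, hz, hzuniq⟩ := PadicInt.existsUnique_eval_eq_zero_of_map_toZMod_eq hv hHmod
  have hroots (b : ℚ_[p]) (hb : f.eval b = 0) (hvb : π.valuation ≤ (a - b).valuation) :
      b = a - π * z := by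
    obtain ⟨y, hy⟩ := Padic.exists_eq_mul_of_valuation_le hπ hvb
    obtain rfl : b = a - π * y := by linear_combination -hy
    rw [hzuniq y (by simpa [hfH, h0] using hb)]
  have hval : (a - (a - π * z)).valuation = π.valuation := by
    rw [sub_sub_cancel, Padic.valuation_mul_of_norm_eq_one hπ
      (PadicInt.norm_eq_one_of_eval_eq_zero one_ne_zero hv hHmod hz)]
  rw [← Padic.valuation_div h0 h1]
  exact ⟨⟨a - π * z, ⟨by rw [hfH, hz, PadicInt.coe_zero, mul_zero], hval.ge⟩,
    fun b hb => hroots b hb.1 hb.2⟩, fun b hb hvb => hroots b hb hvb ▸ hval⟩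

theorem stmt_4 (p : ℕ) [Fact p.Prime] (f : Polynomial ℚ_[p]) (hf : f ≠ 0) (a : ℚ_[p])
    (h0 : (f.comp (Polynomial.X + Polynomial.C a)).coeff 0 ≠ 0)
    (h1 : (f.comp (Polynomial.X + Polynomial.C a)).coeff 1 ≠ 0)
    (hc0 : (f.comp (Polynomial.X + Polynomial.C a)).coeff 0 = f.eval a)
    (hc1 : (f.comp (Polynomial.X + Polynomial.C a)).coeff 1 =
      (Polynomial.derivative f).eval a)
    (hface : ∀ i : ℕ, 2 ≤ i → i ≤ f.natDegree →
      (f.comp (Polynomial.X + Polynomial.C a)).coeff i ≠ 0 →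
      ((f.comp (Polynomial.X + Polynomial.C a)).coeff 0).valuation
        + (i : ℤ) * (((f.comp (Polynomial.X + Polynomial.C a)).coeff 1).valuation
          - ((f.comp (Polynomial.X + Polynomial.C a)).coeff 0).valuation)
        < ((f.comp (Polynomial.X + Polynomial.C a)).coeff i).valuation) :
    (∃! b : ℚ_[p], f.eval b = 0 ∧
      ((f.comp (Polynomial.X + Polynomial.C a)).coeff 0).valuation
        - ((f.comp (Polynomial.X + Polynomial.C a)).coeff 1).valuation
        ≤ (a - b).valuation) ∧
    ∀ b : ℚ_[p], f.eval b = 0 →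
      ((f.comp (Polynomial.X + Polynomial.C a)).coeff 0).valuation
        - ((f.comp (Polynomial.X + Polynomial.C a)).coeff 1).valuation
        ≤ (a - b).valuation →
      (a - b).valuation = ((f.comp (Polynomial.X + Polynomial.C a)).coeff 0).valuation
        - ((f.comp (Polynomial.X + Polynomial.C a)).coeff 1).valuation :=
  stmt_4_general p f a h0 h1 hface
end

section
/- Let α > 0 be a real number and define r(α, b) := b^(α+1) / (b^α − 1) for real b > 1, and r*(α) := (1+α)^(1 + 1/α) / α. Then for every b > 1 one has r(α, b) ≥ r*(α), and equality holds at b = (1+α)^(1/α); in particular (1+α)^(1/α) > 1 and r(α, (1+α)^(1/α)) = r*(α), so b ↦ r(α, b) attains its global minimum on (1, ∞) at b = (1+α)^(1/α). -/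
/-!
Substitute `t = b ^ α > 1` and `p = 1 + 1 / α`, so that `b ^ (α + 1) = t ^ p`. The convex function
`t ↦ t ^ p` lies above its tangent line at `t = 1 + α`, and that tangent line is exactly
`(1 + α) ^ p * (t - 1) / α`; dividing by `t - 1` gives the bound, with equality at the point of
tangency `b ^ α = 1 + α`.
-/

open Real

lemma rpow_add_one_eq_rpow_rpow {b α : ℝ} (hb : 0 ≤ b) (hα : α ≠ 0) :
    b ^ (α + 1) = (b ^ α) ^ (1 + 1 / α) := by
  rw [← rpow_mul hb]
  congr 1
  field_simp

/-- Bernoulli's inequality, rescaled: the tangent line of `t ↦ t ^ p` at `c` lies below it. -/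
lemma rpow_mul_one_add_mul_div_sub_one_le {p c t : ℝ} (hp : 1 ≤ p) (hc : 0 < c) (ht : 0 ≤ t) :
    c ^ p * (1 + p * (t / c - 1)) ≤ t ^ p := by
  have hbernoulli := one_add_mul_self_le_rpow_one_add (s := t / c - 1)
    (by linarith [div_nonneg ht hc.le]) hp
  rw [add_sub_cancel, div_rpow ht hc.le, le_div_iff₀ (rpow_pos_of_pos hc p)] at hbernoulli
  linarith

lemma rpow_one_add_inv_mul_sub_one_le {α t : ℝ} (hα : 0 < α) (ht : 0 ≤ t) :
    (1 + α) ^ (1 + 1 / α) * (t - 1) ≤ t ^ (1 + 1 / α) * α := by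
  have htangent := rpow_mul_one_add_mul_div_sub_one_le (p := 1 + 1 / α)
    (by linarith [one_div_pos.mpr hα]) (by linarith : (0 : ℝ) < 1 + α) ht
  have hline : 1 + (1 + 1 / α) * (t / (1 + α) - 1) = (t - 1) / α := by
    field_simp
    ring
  rw [hline, mul_div_assoc', div_le_iff₀ hα] at htangent
  linarith

lemma rpow_one_add_inv_div_le_rpow_add_one_div {α b : ℝ} (hα : 0 < α) (hb : 1 < b) :
    (1 + α) ^ (1 + 1 / α) / α ≤ b ^ (α + 1) / (b ^ α - 1) := by
  have hbα : 1 < b ^ α := one_lt_rpow hb hα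
  rw [rpow_add_one_eq_rpow_rpow (by linarith) hα.ne', div_le_div_iff₀ hα (by linarith)]
  exact rpow_one_add_inv_mul_sub_one_le hα (by linarith)

lemma rpow_add_one_div_rpow_sub_one_at_one_add_rpow_one_div {α : ℝ} (hα : 0 < α) :
    ((1 + α) ^ (1 / α)) ^ (α + 1) / (((1 + α) ^ (1 / α)) ^ α - 1)
      = (1 + α) ^ (1 + 1 / α) / α := by
  have hA : (0 : ℝ) ≤ 1 + α := by linarith
  rw [← rpow_mul hA, ← rpow_mul hA, one_div_mul_cancel hα.ne', rpow_one, add_sub_cancel_left]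
  congr 2
  field_simp

theorem stmt_8 (α : ℝ) (hα : 0 < α) :
    (∀ b : ℝ, 1 < b → (1 + α) ^ (1 + 1 / α) / α ≤ b ^ (α + 1) / (b ^ α - 1)) ∧
    1 < (1 + α) ^ (1 / α) ∧
    ((1 + α) ^ (1 / α)) ^ (α + 1) / (((1 + α) ^ (1 / α)) ^ α - 1)
      = (1 + α) ^ (1 + 1 / α) / α :=
  ⟨fun _ hb => rpow_one_add_inv_div_le_rpow_add_one_div hα hb,
    one_lt_rpow (by linarith) (one_div_pos.mpr hα),
    rpow_add_one_div_rpow_sub_one_at_one_add_rpow_one_div hα⟩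
end

section
/- For every real number α ≥ 1 one has α·2^α ≤ (2^α − 1)·(1 + α) ≤ (2^α − 1)·(1+α)^(1 + 1/α), and consequently 2^(α+1) / (2^α − 1) ≤ 2·(1+α)^(1 + 1/α) / α. -/
/-! Bernoulli's inequality gives `2 ^ α ≥ 1 + α` for `α ≥ 1`, which is exactly the first
inequality after expanding; the second holds because `1 + α ≥ 1` is raised to an exponent
`≥ 1`. Clearing denominators in the last inequality turns it into the composite of the first two. -/

theorem one_add_le_two_rpow {α : ℝ} (hα : 1 ≤ α) : 1 + α ≤ (2 : ℝ) ^ α := by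
  simpa [one_add_one_eq_two] using
    one_add_mul_self_le_rpow_one_add (by norm_num : (-1 : ℝ) ≤ 1) hα

theorem mul_le_sub_one_mul_one_add_iff (x α : ℝ) :
    α * x ≤ (x - 1) * (1 + α) ↔ 1 + α ≤ x := by
  constructor <;> intro h <;> linarith

theorem rpow_add_one_div_rpow_sub_one_le {b α c : ℝ} (hb : 0 < b) (hα : 0 < α)
    (hbα : 1 < b ^ α) (h : α * b ^ α ≤ (b ^ α - 1) * c) :
    b ^ (α + 1) / (b ^ α - 1) ≤ b * c / α := by
  rw [div_le_div_iff₀ (sub_pos.2 hbα) hα, Real.rpow_add_one hb.ne']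
  nlinarith

theorem stmt_13 (α : ℝ) (hα : 1 ≤ α) :
    (α * (2 : ℝ) ^ α ≤ ((2 : ℝ) ^ α - 1) * (1 + α) ∧
      ((2 : ℝ) ^ α - 1) * (1 + α) ≤ ((2 : ℝ) ^ α - 1) * (1 + α) ^ (1 + 1 / α)) ∧
    (2 : ℝ) ^ (α + 1) / ((2 : ℝ) ^ α - 1) ≤ 2 * (1 + α) ^ (1 + 1 / α) / α := by
  have hbern := one_add_le_two_rpow hα
  have h1 := (mul_le_sub_one_mul_one_add_iff _ _).2 hbern
  have h2 : ((2 : ℝ) ^ α - 1) * (1 + α) ≤ ((2 : ℝ) ^ α - 1) * (1 + α) ^ (1 + 1 / α) :=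
    mul_le_mul_of_nonneg_left
      (Real.self_le_rpow_of_one_le (by linarith) (le_add_of_nonneg_right (by positivity)))
      (by linarith)
  exact ⟨⟨h1, h2⟩,
    rpow_add_one_div_rpow_sub_one_le two_pos (by linarith) (by linarith) (h1.trans h2)⟩
end

section
/- Let I be a finite nonempty index set and x, v, w : I → ℝ functions with w(i) ≤ v(i) for every i ∈ I, and let J := {i ∈ I : w(i) = v(i)}. For t ∈ ℝ, define L(t) := inf{y : (t, y) ∈ convex hull of {(x(i), w(i)) : i ∈ I}}, Δ(t) := inf{y : (t, y) ∈ convex hull of {(x(i), v(i)) : i ∈ I}}, and U(t) := inf{y : (t, y) ∈ convex hull of {(x(i), v(i)) : i ∈ J}}. Suppose t ∈ ℝ is such that there exists y with (t, y) in the convex hull of {(x(i), v(i)) : i ∈ J}, and that L(t) = U(t). Then L(t) = Δ(t) = U(t). -/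
/-! Since `J ⊆ I`, the hull over `J` is contained in the hull over `I`, so `Δ ≤ U`. Since `w ≤ v`,
the hull of the points `(x i, v i)` lies in the hull of the points `(x i, w i)` plus the vertical
ray `{0} × [0, ∞)`, so `L ≤ Δ`. Hence `L ≤ Δ ≤ U = L`. -/

open Set Pointwise

section ConvexHullSection

variable {ι E : Type*} [AddCommGroup E] [Module ℝ E]

theorem bddBelow_section_convexHull_range [Finite ι] (x : ι → E) (v : ι → ℝ) (t : E) :
    BddBelow {y : ℝ | (t, y) ∈ convexHull ℝ (range fun i => (x i, v i))} := by
  obtain ⟨c, hc⟩ := (finite_range v).bddBelow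
  have hull_sub : convexHull ℝ (range fun i => (x i, v i)) ⊆ {p : E × ℝ | c ≤ p.2} :=
    convexHull_min (by rintro _ ⟨i, rfl⟩; exact hc ⟨i, rfl⟩)
      (convex_halfSpace_ge (LinearMap.snd ℝ E ℝ).isLinear c)
  exact ⟨c, fun y hy => hull_sub hy⟩

theorem exists_le_mem_convexHull_range_of_le {x : ι → E} {w v : ι → ℝ} (hwv : ∀ i, w i ≤ v i)
    {t : E} {y : ℝ} (hy : (t, y) ∈ convexHull ℝ (range fun i => (x i, v i))) :
    ∃ z ≤ y, (t, z) ∈ convexHull ℝ (range fun i => (x i, w i)) := by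
  have range_sub : (range fun i => (x i, v i)) ⊆
      (range fun i => (x i, w i)) + ({0} ×ˢ Ici (0 : ℝ)) := by
    rintro _ ⟨i, rfl⟩
    exact ⟨(x i, w i), ⟨i, rfl⟩, (0, v i - w i), ⟨rfl, sub_nonneg.2 (hwv i)⟩, by simp⟩
  have hull_sub : convexHull ℝ (range fun i => (x i, v i)) ⊆
      convexHull ℝ (range fun i => (x i, w i)) + ({0} ×ˢ Ici (0 : ℝ)) := by
    rw [← ((convex_singleton (𝕜 := ℝ) (0 : E)).prod (convex_Ici (0 : ℝ))).convexHull_eq,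
      ← convexHull_add]
    exact convexHull_mono range_sub
  obtain ⟨⟨p₁, p₂⟩, hp, ⟨q₁, q₂⟩, ⟨hq₁ : q₁ = 0, hq₂ : 0 ≤ q₂⟩, hpq⟩ := hull_sub hy
  simp only [Prod.mk_add_mk, Prod.ext_iff, hq₁, add_zero] at hpq
  obtain ⟨rfl, rfl⟩ := hpq
  exact ⟨p₂, by linarith, hp⟩

theorem sInf_section_convexHull_range_mono [Finite ι] (x : ι → E) {w v : ι → ℝ}
    (hwv : ∀ i, w i ≤ v i) {t : E}
    (hne : {y : ℝ | (t, y) ∈ convexHull ℝ (range fun i => (x i, v i))}.Nonempty) :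
    sInf {y : ℝ | (t, y) ∈ convexHull ℝ (range fun i => (x i, w i))} ≤
      sInf {y : ℝ | (t, y) ∈ convexHull ℝ (range fun i => (x i, v i))} := by
  refine le_csInf hne fun y hy => ?_
  obtain ⟨z, hzy, hz⟩ := exists_le_mem_convexHull_range_of_le hwv hy
  exact (csInf_le (bddBelow_section_convexHull_range x w t) hz).trans hzy

theorem section_convexHull_range_comp_subset {κ : Type*} (x : ι → E) (v : ι → ℝ) (f : κ → ι)
    (t : E) :
    {y : ℝ | (t, y) ∈ convexHull ℝ (range fun k => (x (f k), v (f k)))} ⊆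
      {y : ℝ | (t, y) ∈ convexHull ℝ (range fun i => (x i, v i))} :=
  fun _ hy => convexHull_mono (range_comp_subset_range f fun i => (x i, v i)) hy

end ConvexHullSection

theorem stmt_16_general (I : Type*) [Fintype I] (x v w : I → ℝ)
    (hwv : ∀ i, w i ≤ v i) (t : ℝ)
    (hJ : ∃ y : ℝ, (t, y) ∈
      convexHull ℝ (Set.range fun i : {i : I // w i = v i} => (x i.1, v i.1)))
    (hLU : sInf {y : ℝ | (t, y) ∈ convexHull ℝ (Set.range fun i => (x i, w i))}
        = sInf {y : ℝ | (t, y) ∈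
            convexHull ℝ (Set.range fun i : {i : I // w i = v i} => (x i.1, v i.1))}) :
    sInf {y : ℝ | (t, y) ∈ convexHull ℝ (Set.range fun i => (x i, w i))}
        = sInf {y : ℝ | (t, y) ∈ convexHull ℝ (Set.range fun i => (x i, v i))} ∧
    sInf {y : ℝ | (t, y) ∈ convexHull ℝ (Set.range fun i => (x i, v i))}
        = sInf {y : ℝ | (t, y) ∈
            convexHull ℝ (Set.range fun i : {i : I // w i = v i} => (x i.1, v i.1))} := by
  have hJΔ := section_convexHull_range_comp_subset x v
    (Subtype.val : {i : I // w i = v i} → I) t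
  have hΔU := csInf_le_csInf (bddBelow_section_convexHull_range x v t) hJ hJΔ
  have hLΔ := sInf_section_convexHull_range_mono x hwv (Set.Nonempty.mono hJΔ hJ)
  exact ⟨le_antisymm hLΔ (hLU ▸ hΔU), le_antisymm hΔU (hLU ▸ hLΔ)⟩

theorem stmt_16 (I : Type*) [Fintype I] [Nonempty I] (x v w : I → ℝ)
    (hwv : ∀ i, w i ≤ v i) (t : ℝ)
    (hJ : ∃ y : ℝ, (t, y) ∈
      convexHull ℝ (Set.range fun i : {i : I // w i = v i} => (x i.1, v i.1)))
    (hLU : sInf {y : ℝ | (t, y) ∈ convexHull ℝ (Set.range fun i => (x i, w i))}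
        = sInf {y : ℝ | (t, y) ∈
            convexHull ℝ (Set.range fun i : {i : I // w i = v i} => (x i.1, v i.1))}) :
    sInf {y : ℝ | (t, y) ∈ convexHull ℝ (Set.range fun i => (x i, w i))}
        = sInf {y : ℝ | (t, y) ∈ convexHull ℝ (Set.range fun i => (x i, v i))} ∧
    sInf {y : ℝ | (t, y) ∈ convexHull ℝ (Set.range fun i => (x i, v i))}
        = sInf {y : ℝ | (t, y) ∈
            convexHull ℝ (Set.range fun i : {i : I // w i = v i} => (x i.1, v i.1))} :=
  stmt_16_general I x v w hwv t hJ hLU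
end

section
/- Let K be a field that is complete with respect to a nonarchimedean (ultrametric) multiplicative absolute value ‖·‖, let K̄ be an algebraic closure of K equipped with the unique extension of ‖·‖, let a ∈ K̄ be separable over K, and let b ∈ K̄. Suppose that ‖b − a‖ < ‖a′ − a‖ for every K-conjugate a′ of a with a′ ≠ a (i.e. every other root a′ of the minimal polynomial of a over K). Then a lies in the field K(b), i.e. K(a) ⊆ K(b). -/
/-!
Mathlib proves Krasner's lemma for complete nontrivially normed fields by comparing the
norm of `L` with the spectral norm. When the norm of `K` is trivial, every element of `L`
is a root of a monic polynomial whose coefficients have norm at most `1`, hence has norm at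
most `1`; applied to `z` and `z⁻¹` this makes every nonzero distance in `L` equal to `1`.
The Krasner hypothesis then forces `b = a` unless `a` has no conjugate besides itself,
in which case `a` lies in `K`.
-/

open IntermediateField

abbrev NormedAlgebra.ofNormAlgebraMap (K L : Type*) [NormedField K] [NormedField L] [Algebra K L]
    (hext : ∀ c : K, ‖algebraMap K L c‖ = ‖c‖) : NormedAlgebra K L where
  norm_smul_le c x := by rw [Algebra.smul_def, norm_mul, hext]

section TriviallyNormed

variable {K L : Type*} [NormedField K] [NormedField L] [NormedAlgebra K L] [IsUltrametricDist L]

theorem norm_le_one_of_isIntegral (hK : ∀ c : K, ‖c‖ ≤ 1) {z : L} (hz : IsIntegral K z) :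
    ‖z‖ ≤ 1 :=
  calc ‖z‖ = (NormedAlgebra.toMulAlgebraNorm K L : AlgebraNorm K L) z := rfl
    _ ≤ spectralValue (minpoly K z) :=
      norm_root_le_spectralValue (fun x _ _ => norm_pow x _)
        IsUltrametricDist.isNonarchimedean_norm (minpoly.monic hz) (minpoly.aeval K z)
    _ ≤ 1 := (spectralValue_le_one_iff (minpoly.monic hz)).2 fun _ => hK _

theorem norm_eq_one_of_forall_norm_le_one [Algebra.IsAlgebraic K L] (hK : ∀ c : K, ‖c‖ ≤ 1)
    {z : L} (hz : z ≠ 0) : ‖z‖ = 1 := by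
  have hle : ‖z‖ ≤ 1 := norm_le_one_of_isIntegral hK (Algebra.IsIntegral.isIntegral z)
  have hinv : ‖z‖⁻¹ ≤ 1 :=
    norm_inv z ▸ norm_le_one_of_isIntegral hK (Algebra.IsIntegral.isIntegral z⁻¹)
  exact le_antisymm hle ((inv_le_one₀ (norm_pos_iff.2 hz)).1 hinv)

theorem IsKrasner.of_forall_norm_le_one [Algebra.IsAlgebraic K L] (hK : ∀ c : K, ‖c‖ ≤ 1) :
    IsKrasner K L where
  krasner' {x y} xsep sp _ kr := by
    by_cases hxy : x = y
    · exact hxy ▸ mem_adjoin_simple_self K x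
    have hx : x ∈ (⊥ : Subalgebra K L) := by
      by_contra hx
      obtain ⟨x', hne, hconj⟩ := (notMem_iff_exists_ne_and_isConjRoot xsep sp).1 hx
      have := kr x' hconj hne
      rw [norm_eq_one_of_forall_norm_le_one hK (sub_ne_zero.2 hxy),
        norm_eq_one_of_forall_norm_le_one hK (sub_ne_zero.2 hne)] at this
      exact lt_irrefl 1 this
    obtain ⟨c, rfl⟩ := Algebra.mem_bot.1 hx
    exact IntermediateField.algebraMap_mem _ c

end TriviallyNormed

theorem IsKrasner.of_completeSpace_of_normedField (K L : Type*) [NormedField K] [CompleteSpace K]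
    [IsUltrametricDist K] [NormedField L] [IsUltrametricDist L] [NormedAlgebra K L]
    [Algebra.IsAlgebraic K L] : IsKrasner K L := by
  by_cases hK : ∀ c : K, ‖c‖ ≤ 1
  · exact IsKrasner.of_forall_norm_le_one hK
  · push Not at hK
    let : NontriviallyNormedField K := { ‹NormedField K› with non_trivial := hK }
    exact IsKrasner.of_completeSpace K L

/-- Krasner's lemma. -/
theorem stmt_17 (K : Type*) [NormedField K] [CompleteSpace K] [IsUltrametricDist K]
    (L : Type*) [NormedField L] [IsUltrametricDist L] [Algebra K L] [IsAlgClosure K L]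
    (hext : ∀ y : K, ‖algebraMap K L y‖ = ‖y‖)
    (a b : L) (hsep : IsSeparable K a)
    (hkras : ∀ a' ∈ (minpoly K a).aroots L, a' ≠ a → ‖b - a‖ < ‖a' - a‖) :
    a ∈ IntermediateField.adjoin K {b} := by
  let := NormedAlgebra.ofNormAlgebraMap K L hext
  have : Algebra.IsAlgebraic K L := IsAlgClosure.isAlgebraic
  have : IsAlgClosed L := IsAlgClosure.isAlgClosed K
  have := IsKrasner.of_completeSpace_of_normedField K L
  refine IsKrasner.krasner hsep (IsAlgClosed.splits _) (Algebra.IsIntegral.isIntegral b)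
    fun a' hconj hne => ?_
  rw [norm_sub_rev, norm_sub_rev a]
  exact hkras a' ((isConjRoot_iff_mem_minpoly_aroots hsep.isIntegral).1 hconj) (Ne.symm hne)
end

section
/- Let d ≥ 1 be a natural number and u ∈ ℚ₂. Then the polynomial (X − u)^d − 2^(10d+1) is irreducible over the field ℚ₂ of 2-adic numbers. -/
/-!
The substitution `X ↦ 2¹⁰ X + u` turns `(X - u)^d - 2^(10d+1)` into `2^(10d) (X^d - 2)`, and
`X^d - 2` is Eisenstein at the prime `2` of `ℤ₂`, hence irreducible over `ℤ₂` and, by Gauss's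
lemma, over its fraction field `ℚ₂`.
-/

open Polynomial

namespace Polynomial

theorem irreducible_X_pow_sub_C_of_prime {R : Type*} [CommRing R] [IsDomain R]
    {p : R} (hp : Prime p) {d : ℕ} (hd : d ≠ 0) : Irreducible (X ^ d - C p : R[X]) := by
  have hprime : (Ideal.span {p}).IsPrime := (Ideal.span_singleton_prime hp.ne_zero).mpr hp
  have hmonic : (X ^ d - C p : R[X]).Monic := monic_X_pow_sub_C p hd
  refine IsEisensteinAt.irreducible (hmonic.isEisensteinAt_of_mem_of_notMem hprime.ne_top ?_ ?_)
    hprime hmonic.isPrimitive (by rw [natDegree_X_pow_sub_C]; omega)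
  · intro n hn
    rw [natDegree_X_pow_sub_C] at hn
    rw [coeff_sub, coeff_X_pow, if_neg hn.ne, coeff_C]
    split_ifs <;> simp
  · rw [coeff_sub, coeff_X_pow, if_neg hd.symm, coeff_C, if_pos rfl, zero_sub,
      Ideal.span_singleton_pow, Ideal.mem_span_singleton, dvd_neg, pow_two]
    intro h
    exact hp.not_isUnit
      (isUnit_of_dvd_one ((mul_dvd_mul_iff_left hp.ne_zero).mp (by simpa using h)))

theorem irreducible_X_pow_sub_C_algebraMap_of_prime {R K : Type*} [CommRing R] [IsDomain R]
    [IsIntegrallyClosed R] [Field K] [Algebra R K] [IsFractionRing R K]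
    {p : R} (hp : Prime p) {d : ℕ} (hd : d ≠ 0) :
    Irreducible (X ^ d - C (algebraMap R K p)) := by
  have := ((monic_X_pow_sub_C p hd).irreducible_iff_irreducible_map_fraction_map (K := K)).mp
    (irreducible_X_pow_sub_C_of_prime hp hd)
  simpa only [Polynomial.map_sub, Polynomial.map_pow, map_X, map_C] using this

theorem irreducible_X_sub_C_pow_sub_C_mul_iff {R : Type*} [CommRing R] {a : R}
    (ha : IsUnit a) (b c : R) (d : ℕ) :
    Irreducible ((X - C b) ^ d - C (a ^ d * c)) ↔ Irreducible (X ^ d - C c) := by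
  let := ha.invertible
  have hsubst :
      algEquivCMulXAddC a b ((X - C b) ^ d - C (a ^ d * c)) = C (a ^ d) * (X ^ d - C c) := by
    simp only [algEquivCMulXAddC_apply, map_sub, map_pow, aeval_X, aeval_C, add_sub_cancel_right,
      algebraMap_eq]
    rw [C_mul, C_pow]
    ring
  rw [← MulEquiv.irreducible_iff (algEquivCMulXAddC a b), hsubst,
    irreducible_isUnit_mul (isUnit_C.mpr (ha.pow d))]

end Polynomial

theorem stmt_18 (d : ℕ) (hd : 1 ≤ d) (u : ℚ_[2]) :
    Irreducible ((Polynomial.X - Polynomial.C u) ^ d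
      - Polynomial.C ((2 : ℚ_[2]) ^ (10 * d + 1))) := by
  have hconst :
      (2 : ℚ_[2]) ^ (10 * d + 1) = ((2 : ℚ_[2]) ^ 10) ^ d * algebraMap ℤ_[2] ℚ_[2] 2 := by
    rw [map_ofNat, ← pow_mul, pow_succ, mul_comm 10 d]
  rw [hconst, irreducible_X_sub_C_pow_sub_C_mul_iff (IsUnit.mk0 _ (by norm_num))]
  exact irreducible_X_pow_sub_C_algebraMap_of_prime (by simpa using PadicInt.prime_p (p := 2))
    (by omega)
end
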